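/- Let n(x) = (s-2)(s-3)x^s - 2s(s-3)x^{s-1} + s(s-1)x^{s-2} - 2sx + 2(s-3) for an integer s ≥ 4. Then n(x) ≥ 0 for all x ≥ 0, with equality only at x = 1. -/

import Mathlib

/-!
Dividing by the quadruple root at `x = 1` gives
`n(x) = (x - 1)^4 * ∑_{k < s-3} (k+1)(k+2)(s-3-k) x^k`, and the quotient has positive
coefficients and a positive constant term, so it is positive on `[0, ∞)`.
-/

def nPoly (s : ℕ) (x : ℝ) : ℝ :=
  ((s : ℝ) - 2) * ((s : ℝ) - 3) * x ^ s - 2 * (s : ℝ) * ((s : ℝ) - 3) * x ^ (s - 1)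
    + (s : ℝ) * ((s : ℝ) - 1) * x ^ (s - 2) - 2 * (s : ℝ) * x + 2 * ((s : ℝ) - 3)

def secondDerivGeomSum (N : ℕ) (x : ℝ) : ℝ :=
  ∑ k ∈ Finset.range N, ((k : ℝ) + 1) * ((k : ℝ) + 2) * x ^ k

def nPolyQuotient (N : ℕ) (x : ℝ) : ℝ :=
  ∑ k ∈ Finset.range N, ((k : ℝ) + 1) * ((k : ℝ) + 2) * ((N : ℝ) - k) * x ^ k

lemma pow_four_mul_secondDerivGeomSum (N : ℕ) (x : ℝ) :
    (x - 1) ^ 4 * secondDerivGeomSum N x =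
      2 - 2 * x - ((N : ℝ) + 1) * ((N : ℝ) + 2) * x ^ N
        + (3 * (N : ℝ) + 1) * ((N : ℝ) + 2) * x ^ (N + 1)
        - (N : ℝ) * (3 * (N : ℝ) + 5) * x ^ (N + 2)
        + (N : ℝ) * ((N : ℝ) + 1) * x ^ (N + 3) := by
  induction N with
  | zero => simp [secondDerivGeomSum]
  | succ N ih =>
    rw [secondDerivGeomSum, Finset.sum_range_succ, ← secondDerivGeomSum, mul_add, ih]
    push_cast
    ring

lemma nPolyQuotient_succ (N : ℕ) (x : ℝ) :
    nPolyQuotient (N + 1) x = nPolyQuotient N x + secondDerivGeomSum (N + 1) x := by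
  have hsplit : ∑ k ∈ Finset.range N, ((k : ℝ) + 1) * ((k : ℝ) + 2) * (((N + 1 : ℕ) : ℝ) - k) * x ^ k
      = nPolyQuotient N x + secondDerivGeomSum N x := by
    rw [nPolyQuotient, secondDerivGeomSum, ← Finset.sum_add_distrib]
    exact Finset.sum_congr rfl fun k _ => by push_cast; ring
  rw [nPolyQuotient, Finset.sum_range_succ, hsplit, secondDerivGeomSum, secondDerivGeomSum,
    Finset.sum_range_succ]
  push_cast
  ring

lemma nPoly_eq_pow_four_mul (N : ℕ) (x : ℝ) :
    nPoly (N + 3) x = (x - 1) ^ 4 * nPolyQuotient N x := by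
  induction N with
  | zero => norm_num [nPoly, nPolyQuotient]
  | succ N ih =>
    rw [nPolyQuotient_succ, mul_add, ← ih, pow_four_mul_secondDerivGeomSum]
    simp only [nPoly, show N + 1 + 3 - 1 = N + 3 from rfl, show N + 1 + 3 - 2 = N + 2 from rfl,
      show N + 3 - 1 = N + 2 from rfl, show N + 3 - 2 = N + 1 from rfl]
    push_cast
    ring

lemma nPolyQuotient_pos {N : ℕ} (hN : 0 < N) {x : ℝ} (hx : 0 ≤ x) : 0 < nPolyQuotient N x := by
  refine Finset.sum_pos' (fun k hk => ?_) ⟨0, Finset.mem_range.mpr hN, ?_⟩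
  · have hkN : (k : ℝ) ≤ N := by exact_mod_cast (Finset.mem_range.mp hk).le
    have : 0 ≤ (N : ℝ) - k := sub_nonneg.mpr hkN
    positivity
  · have : (0 : ℝ) < N := by exact_mod_cast hN
    simpa using this

theorem nPoly_nonneg (s : ℕ) (hs : 4 ≤ s) :
    ∀ x : ℝ, 0 ≤ x → 0 ≤ nPoly s x ∧ (nPoly s x = 0 → x = 1) := by
  obtain ⟨N, rfl⟩ : ∃ N, s = N + 3 := ⟨s - 3, by omega⟩
  intro x hx
  rw [nPoly_eq_pow_four_mul]
  have hquot := nPolyQuotient_pos (N := N) (by omega) hx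
  refine ⟨by positivity, fun h => ?_⟩
  have hpow : (x - 1) ^ 4 = 0 := (mul_eq_zero.mp h).resolve_right hquot.ne'
  exact sub_eq_zero.mp (pow_eq_zero_iff four_ne_zero |>.mp hpow)
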